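/- arXiv:1205.3369 — 2 statements merged into one kernel-verified Lean document; each statement's English description precedes it below -/
import Mathlib

section
/- Let (X, ‖·,·‖) be a real linear 2-normed space, G a convex subset of X, b ∈ X, and W a nonempty bounded subset of X. If g₁, g₂ ∈ G are both best simultaneous approximations to W from G relative to b (i.e., sup_{f∈W} ‖f − gᵢ, b‖ = inf_{g∈G} sup_{f∈W} ‖f − g, b‖ for i = 1,2), then for every λ ∈ [0,1] the convex combination ḡ = λg₁ + (1−λ)g₂ is also a best simultaneous approximation to W from G relative to b. -/
theorem stmt7 {X : Type*} [AddCommGroup X] [Module ℝ X]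
    (N : X → X → ℝ)
    (hN1 : ∀ x y : X, N x y = 0 ↔ ¬ LinearIndependent ℝ ![x, y])
    (hN2 : ∀ x y : X, N x y = N y x)
    (hN3 : ∀ (α : ℝ) (x y : X), N (α • x) y = |α| * N x y)
    (hN4 : ∀ x y z : X, N (x + y) z ≤ N x z + N y z)
    (b : X) (G : Set X) (hG : Convex ℝ G)
    (W : Set X) (hWne : W.Nonempty)
    (hWbdd : ∃ M : ℝ, ∀ f ∈ W, N f b ≤ M)
    (g₁ g₂ : X) (hg₁ : g₁ ∈ G) (hg₂ : g₂ ∈ G)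
    (hbest₁ : sSup ((fun f => N (f - g₁) b) '' W) =
      sInf ((fun g => sSup ((fun f => N (f - g) b) '' W)) '' G))
    (hbest₂ : sSup ((fun f => N (f - g₂) b) '' W) =
      sInf ((fun g => sSup ((fun f => N (f - g) b) '' W)) '' G))
    (lam : ℝ) (hlam0 : 0 ≤ lam) (hlam1 : lam ≤ 1) :
    lam • g₁ + (1 - lam) • g₂ ∈ G ∧
    sSup ((fun f => N (f - (lam • g₁ + (1 - lam) • g₂)) b) '' W) =
      sInf ((fun g => sSup ((fun f => N (f - g) b) '' W)) '' G) := by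
  obtain ⟨M, hM⟩ := hWbdd
  -- basic facts about N
  have hzero : ∀ y : X, N 0 y = 0 := by
    intro y
    have := hN3 0 0 y
    simpa using this
  have hneg : ∀ x y : X, N (-x) y = N x y := by
    intro x y
    have := hN3 (-1) x y
    simpa using this
  have hnonneg : ∀ x y : X, 0 ≤ N x y := by
    intro x y
    have h := hN4 x (-x) y
    rw [hneg] at h
    simp at h
    rw [hzero] at h
    linarith
  set gb := lam • g₁ + (1 - lam) • g₂ with hgb
  have hmem : gb ∈ G := hG hg₁ hg₂ hlam0 (by linarith) (by linarith)
  refine ⟨hmem, ?_⟩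
  -- boundedness above of each sup set
  have hbdd : ∀ g : X, BddAbove ((fun f => N (f - g) b) '' W) := by
    intro g
    refine ⟨M + N g b, ?_⟩
    rintro _ ⟨f, hf, rfl⟩
    have h1 : N (f - g) b ≤ N f b + N (-g) b := by
      have := hN4 f (-g) b
      simpa [sub_eq_add_neg] using this
    rw [hneg] at h1
    have := hM f hf
    linarith
  have hWne' : ∀ g : X, ((fun f => N (f - g) b) '' W).Nonempty := fun g => hWne.image _
  -- sInf set is bounded below by 0
  have hInfBdd : BddBelow ((fun g => sSup ((fun f => N (f - g) b) '' W)) '' G) := by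
    refine ⟨0, ?_⟩
    rintro _ ⟨g, hg, rfl⟩
    obtain ⟨f, hf⟩ := hWne
    exact le_trans (hnonneg (f - g) b) (le_csSup (hbdd g) ⟨f, hf, rfl⟩)
  set E := sInf ((fun g => sSup ((fun f => N (f - g) b) '' W)) '' G) with hE
  have hle : sSup ((fun f => N (f - gb) b) '' W) ≤ E := by
    apply csSup_le (hWne' gb)
    rintro _ ⟨f, hf, rfl⟩
    have hsplit : f - gb = lam • (f - g₁) + (1 - lam) • (f - g₂) := by
      rw [hgb]; module
    have h1 : N (f - gb) b ≤ lam * N (f - g₁) b + (1 - lam) * N (f - g₂) b := by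
      rw [hsplit]
      calc N (lam • (f - g₁) + (1 - lam) • (f - g₂)) b
          ≤ N (lam • (f - g₁)) b + N ((1 - lam) • (f - g₂)) b := hN4 _ _ _
        _ = lam * N (f - g₁) b + (1 - lam) * N (f - g₂) b := by
            rw [hN3, hN3, abs_of_nonneg hlam0, abs_of_nonneg (by linarith : (0:ℝ) ≤ 1 - lam)]
    have h2 : N (f - g₁) b ≤ E := hbest₁ ▸ le_csSup (hbdd g₁) ⟨f, hf, rfl⟩
    have h3 : N (f - g₂) b ≤ E := hbest₂ ▸ le_csSup (hbdd g₂) ⟨f, hf, rfl⟩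
    nlinarith
  have hge : E ≤ sSup ((fun f => N (f - gb) b) '' W) :=
    csInf_le hInfBdd ⟨gb, hmem, rfl⟩
  exact le_antisymm hle hge
end

section
/- Let X be a real inner product space with the standard 2-norm ‖x,y‖ = √(‖x‖²‖y‖² − ⟨x,y⟩²), z ∈ X fixed, x₀ ∈ X, and d₀ = inf_{y ∈ Y} ‖x₀ − y, z‖ for a nonempty convex set Y ⊆ X. If y₀, y₀' ∈ Y both satisfy ‖x₀ − y₀, z‖ = d₀ = ‖x₀ − y₀', z‖, then ‖y₀ − y₀', z‖ = 0, i.e., y₀ − y₀' is linearly dependent with z. -/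
/-!
For fixed `z`, the square of the 2-norm `‖x, z‖² = ‖x‖²‖z‖² - ⟪x, z⟫²` is the quadratic form of the
semi-inner product `⟪u, v⟫‖z‖² - ⟪u, z⟫⟪v, z⟫`, so it satisfies the parallelogram law. Two nearest
points `y₀, y₀'` of a convex set thus behave as in Hilbert space: with `u = x₀ - y₀`, `v = x₀ - y₀'`,
the midpoint of `y₀, y₀'` lies in the set, so `‖u + v, z‖² ≥ 4 d₀²`, and the parallelogram law forces
`‖y₀ - y₀', z‖² = ‖u - v, z‖² ≤ 0`. Vanishing of the 2-norm is equality in Cauchy–Schwarz.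
-/

open RealInnerProductSpace

section TwoNorm

variable {X : Type*} [NormedAddCommGroup X] [InnerProductSpace ℝ X]

def twoNormSq (x z : X) : ℝ := ‖x‖ ^ 2 * ‖z‖ ^ 2 - ⟪x, z⟫ ^ 2

lemma twoNormSq_nonneg (x z : X) : 0 ≤ twoNormSq x z := by
  have h := abs_real_inner_le_norm x z
  have : ⟪x, z⟫ ^ 2 ≤ (‖x‖ * ‖z‖) ^ 2 := sq_le_sq' (abs_le.1 h).1 (abs_le.1 h).2
  unfold twoNormSq
  linarith [mul_pow ‖x‖ ‖z‖ 2]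

lemma twoNormSq_eq_inner (x z : X) : twoNormSq x z = ⟪x, x⟫ * ⟪z, z⟫ - ⟪x, z⟫ ^ 2 := by
  simp only [twoNormSq, real_inner_self_eq_norm_sq]

lemma twoNormSq_add_add_sub (u v z : X) :
    twoNormSq (u + v) z + twoNormSq (u - v) z = 2 * twoNormSq u z + 2 * twoNormSq v z := by
  simp only [twoNormSq_eq_inner, inner_add_left, inner_sub_left, inner_add_right, inner_sub_right,
    real_inner_comm u v]
  ring

lemma twoNormSq_smul (c : ℝ) (x z : X) : twoNormSq (c • x) z = c ^ 2 * twoNormSq x z := by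
  simp only [twoNormSq_eq_inner, real_inner_smul_left, real_inner_smul_right]
  ring

lemma twoNormSq_sub_comm (x y z : X) : twoNormSq (x - y) z = twoNormSq (y - x) z := by
  rw [← neg_sub, twoNormSq, twoNormSq, norm_neg, inner_neg_left, neg_sq]

lemma not_linearIndependent_of_twoNormSq_eq_zero {x z : X} (h : twoNormSq x z = 0) :
    ¬ LinearIndependent ℝ ![x, z] := by
  intro hli
  have hsq : (‖x‖ * ‖z‖) ^ 2 = |⟪x, z⟫| ^ 2 := by
    rw [sq_abs, mul_pow]
    unfold twoNormSq at h
    linarith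
  have hnorm : ‖⟪x, z⟫‖ = ‖x‖ * ‖z‖ :=
    (pow_left_inj₀ (abs_nonneg _) (by positivity) two_ne_zero).1 hsq.symm
  rcases (norm_inner_eq_norm_tfae ℝ x z).out 0 2 |>.1 hnorm with hx | ⟨r, hr⟩
  · exact hli.ne_zero 0 (by simpa using hx)
  · have := LinearIndependent.pair_iff.1 hli r (-1) (by rw [hr]; module)
    norm_num at this

lemma twoNormSq_sub_eq_zero_of_isMinOn {Y : Set X} (hY : Convex ℝ Y) {x₀ y₀ y₀' z : X}
    (hy₀ : y₀ ∈ Y) (hy₀' : y₀' ∈ Y) (hmin : IsMinOn (fun y ↦ twoNormSq (x₀ - y) z) Y y₀)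
    (hmin' : IsMinOn (fun y ↦ twoNormSq (x₀ - y) z) Y y₀') :
    twoNormSq (y₀ - y₀') z = 0 := by
  set q : X → ℝ := fun y ↦ twoNormSq (x₀ - y) z
  have hq : q y₀ = q y₀' := le_antisymm (hmin hy₀') (hmin' hy₀)
  have hmid : q y₀ ≤ q (midpoint ℝ y₀ y₀') := hmin (hY.midpoint_mem hy₀ hy₀')
  have hsum : (x₀ - y₀) + (x₀ - y₀') = (2 : ℝ) • (x₀ - midpoint ℝ y₀ y₀') := by
    rw [midpoint_eq_smul_add, invOf_eq_inv]
    module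
  have hpar := twoNormSq_add_add_sub (x₀ - y₀) (x₀ - y₀') z
  rw [hsum, twoNormSq_smul, sub_sub_sub_cancel_left] at hpar
  rw [twoNormSq_sub_comm]
  exact le_antisymm (by simp only [q] at hq hmid; nlinarith) (twoNormSq_nonneg _ _)

end TwoNorm

theorem stmt13_general {X : Type*} [NormedAddCommGroup X] [InnerProductSpace ℝ X]
    (N : X → X → ℝ)
    (hN : ∀ x y : X, N x y =
      Real.sqrt (‖x‖ ^ 2 * ‖y‖ ^ 2 - (inner ℝ x y : ℝ) ^ 2))
    (z x₀ : X) (Y : Set X) (hYconv : Convex ℝ Y)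
    (d₀ : ℝ) (hd₀ : d₀ = sInf ((fun y => N (x₀ - y) z) '' Y))
    (y₀ y₀' : X) (hy₀ : y₀ ∈ Y) (hy₀' : y₀' ∈ Y)
    (h₁ : N (x₀ - y₀) z = d₀) (h₂ : N (x₀ - y₀') z = d₀) :
    N (y₀ - y₀') z = 0 ∧ ¬ LinearIndependent ℝ ![y₀ - y₀', z] := by
  have hN' : ∀ x, N x z = √(twoNormSq x z) := fun x ↦ hN x z
  have hbdd : BddBelow ((fun y => N (x₀ - y) z) '' Y) :=
    ⟨0, by rintro _ ⟨y, _, rfl⟩; exact (Real.sqrt_nonneg _).trans (hN' _).ge⟩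
  have hd₀_le : ∀ y ∈ Y, d₀ ≤ N (x₀ - y) z := fun y hy ↦ hd₀ ▸ csInf_le hbdd ⟨y, hy, rfl⟩
  have isMinOn_of_eq : ∀ y, N (x₀ - y) z = d₀ → IsMinOn (fun y ↦ twoNormSq (x₀ - y) z) Y y :=
    fun y hy y' hy' ↦ (Real.sqrt_le_sqrt_iff (twoNormSq_nonneg _ _)).1 <| by
      rw [← hN', ← hN', hy]; exact hd₀_le y' hy'
  have hzero := twoNormSq_sub_eq_zero_of_isMinOn hYconv hy₀ hy₀'
    (isMinOn_of_eq y₀ h₁) (isMinOn_of_eq y₀' h₂)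
  exact ⟨by rw [hN', hzero, Real.sqrt_zero], not_linearIndependent_of_twoNormSq_eq_zero hzero⟩

theorem stmt13 {X : Type*} [NormedAddCommGroup X] [InnerProductSpace ℝ X]
    (N : X → X → ℝ)
    (hN : ∀ x y : X, N x y =
      Real.sqrt (‖x‖ ^ 2 * ‖y‖ ^ 2 - (inner ℝ x y : ℝ) ^ 2))
    (z x₀ : X) (Y : Set X) (hYne : Y.Nonempty) (hYconv : Convex ℝ Y)
    (d₀ : ℝ) (hd₀ : d₀ = sInf ((fun y => N (x₀ - y) z) '' Y))
    (y₀ y₀' : X) (hy₀ : y₀ ∈ Y) (hy₀' : y₀' ∈ Y)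
    (h₁ : N (x₀ - y₀) z = d₀) (h₂ : N (x₀ - y₀') z = d₀) :
    N (y₀ - y₀') z = 0 ∧ ¬ LinearIndependent ℝ ![y₀ - y₀', z] :=
  stmt13_general N hN z x₀ Y hYconv d₀ hd₀ y₀ y₀' hy₀ hy₀' h₁ h₂
end
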